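/- Let (a,b,c) ∈ k³ \ {(0,0,0)}. (1) If a ≠ 0 and a+b ≠ 0, then U(a,b,c) is isomorphic as a left Λ-module to M(ω(a,b,c)), where ω(a,b,c) = (a, qb, −(a/(a+b))·c). (2) If a ≠ 0, a+b = 0 and c ≠ 0, then U(a,b,c) is isomorphic as a left Λ-module to M(0,0,1). (3) If a = 0 and b ≠ 0, then U(a,b,c) is isomorphic as a left Λ-module to M(0,1,0). (Since U(a,b,c) is the kernel of the projective cover Λ → M(a,b,c), these isomorphisms compute the syzygy Ω M(a,b,c) ≅ U(a,b,c) in these cases.) -/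

import Mathlib

open CategoryTheory Limits Opposite

/-- The algebra `Λ = Λ(q)` of Ringel–Zhang: a `k`-algebra with distinguished elements
`x, y, z` satisfying the defining relations
`x² = y² = z² = 0`, `yz = 0`, `xy + q·yx = 0`, `xz = zx`, `zy = zx`,
and admitting the `k`-basis `{1, x, y, z, yx, zx}`.
Any such algebra is canonically isomorphic to the quotient of the free algebra
`k⟨x,y,z⟩` by the two-sided ideal generated by these relations. -/
structure LambdaAlg (k : Type) [Field k] (q : k) (Λ : Type) [Ring Λ] [Algebra k Λ] :
    Type where
  x : Λ
  y : Λ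
  z : Λ
  hxx : x * x = 0
  hyy : y * y = 0
  hzz : z * z = 0
  hyz : y * z = 0
  hxy : x * y + q • (y * x) = 0
  hxz : x * z - z * x = 0
  hzy : z * y - z * x = 0
  basis : Module.Basis (Fin 6) k Λ
  hb0 : basis 0 = 1
  hb1 : basis 1 = x
  hb2 : basis 2 = y
  hb3 : basis 3 = z
  hb4 : basis 4 = y * x
  hb5 : basis 5 = z * x

namespace LambdaAlg

variable {k : Type} [Field k] {q : k} {Λ : Type} [Ring Λ] [Algebra k Λ]

/-- The element `ax + by + cz` of `Λ`. -/
def w (D : LambdaAlg k q Λ) (a b c : k) : Λ := a • D.x + b • D.y + c • D.z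

/-- The left ideal `U(a,b,c) = Λ(ax+by+cz) + Λ·yx + Λ·zx` of `Λ`. -/
def U (D : LambdaAlg k q Λ) (a b c : k) : Submodule Λ Λ :=
  Submodule.span Λ {D.w a b c, D.y * D.x, D.z * D.x}

/-- The left `Λ`-module `M(a,b,c) = Λ/U(a,b,c)`. -/
abbrev M (D : LambdaAlg k q Λ) (a b c : k) : Type := Λ ⧸ D.U a b c

/-- The right ideal `U′(a,b,c) = (ax+by+cz)Λ + yx·Λ + zx·Λ` of `Λ`,
viewed as a `Λᵐᵒᵖ`-submodule of `Λ`. -/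
def U' (D : LambdaAlg k q Λ) (a b c : k) : Submodule Λᵐᵒᵖ Λ :=
  Submodule.span Λᵐᵒᵖ {D.w a b c, D.y * D.x, D.z * D.x}

/-- The right `Λ`-module `M′(a,b,c) = Λ/U′(a,b,c)` (a module over `Λᵐᵒᵖ`). -/
abbrev M' (D : LambdaAlg k q Λ) (a b c : k) : Type := Λ ⧸ D.U' a b c

/-- The `k`-subspace `{m ∈ M : x·m = y·m = z·m = 0}` of a left `Λ`-module `M`;
since `x, y, z` generate `rad Λ` and every simple `Λ`-module is isomorphic to `k`,
this is the socle of `M`. -/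
def ann (D : LambdaAlg k q Λ) (M : Type) [AddCommGroup M] [Module k M] [Module Λ M]
    [IsScalarTower k Λ M] : Submodule k M where
  carrier := {m | D.x • m = 0 ∧ D.y • m = 0 ∧ D.z • m = 0}
  add_mem' := by
    rintro a b ⟨h1, h2, h3⟩ ⟨g1, g2, g3⟩
    simp [smul_add, h1, h2, h3, g1, g2, g3]
  zero_mem' := by simp
  smul_mem' := by
    rintro a m ⟨h1, h2, h3⟩
    refine ⟨?_, ?_, ?_⟩ <;> rw [smul_comm] <;> simp [h1, h2, h3]

/-- The submodule `(rad Λ)·M = x·M + y·M + z·M` of a left `Λ`-module `M`. -/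
def radM (D : LambdaAlg k q Λ) (M : Type) [AddCommGroup M] [Module Λ M] :
    Submodule Λ M :=
  Submodule.span Λ
    (Set.range (fun m : M => D.x • m) ∪ Set.range (fun m : M => D.y • m) ∪
      Set.range (fun m : M => D.z • m))

end LambdaAlg

/-- A module is indecomposable if it is nonzero and is not the direct sum of two
nonzero submodules. -/
def IsIndecomposable (R : Type) [Ring R] (M : Type) [AddCommGroup M] [Module R M] :
    Prop :=
  Nontrivial M ∧
    ∀ N₁ N₂ : Submodule R M, N₁ ⊓ N₂ = ⊥ → N₁ ⊔ N₂ = ⊤ → N₁ = ⊥ ∨ N₂ = ⊥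

/-- A module is torsionless if it admits an injective linear map into a finite free
module. -/
def IsTorsionless (R : Type) [Ring R] (M : Type) [AddCommGroup M] [Module R M] : Prop :=
  ∃ (n : ℕ) (f : M →ₗ[R] (Fin n → R)), Function.Injective f

/-- The canonical evaluation map `M → M** = Hom_{Λᵒᵖ}(Hom_Λ(M, Λ), Λ)`,
sending `m` to `f ↦ f m`. -/
def evalMap (Λ : Type) [Ring Λ] (M : Type) [AddCommGroup M] [Module Λ M] :
    M → ((M →ₗ[Λ] Λ) →ₗ[Λᵐᵒᵖ] Λ) := fun m =>
  { toFun := fun f => f m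
    map_add' := fun _ _ => rfl
    map_smul' := fun _ _ => rfl }

/-- The transformation `ω′(a,b,c) = (a, q⁻¹b, −((a+q⁻¹b)/a)·c)` on triples. -/
def omegaPrime {k : Type} [Field k] (q : k) (t : k × k × k) : k × k × k :=
  (t.1, q⁻¹ * t.2.1, -((t.1 + q⁻¹ * t.2.1) / t.1) * t.2.2)

/-!
Whenever `Λ·w` (with `w = ax + by + cz`) contains the socle `yx, zx`, the ideal `U(a,b,c)` is the
cyclic module `Λ·w ≅ Λ / ann(w)`. Expanding `λ·w` in the basis `{1, x, y, z, yx, zx}` shows that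
`λ` kills `w` exactly when it has no constant term and its linear part `a'x + b'y + c'z` satisfies
two linear equations; in each of the three cases their solutions form the line through
`(a', b', c') = ω(a,b,c)`, `(0,0,1)` or `(0,1,0)`, so `ann(w) = U(a',b',c')`.
-/

namespace LambdaAlg

variable {k : Type} [Field k] {q : k} {Λ : Type} [Ring Λ] [Algebra k Λ] (D : LambdaAlg k q Λ)

lemma x_mul_y : D.x * D.y = -(q • (D.y * D.x)) := eq_neg_of_add_eq_zero_left D.hxy
lemma x_mul_z : D.x * D.z = D.z * D.x := sub_eq_zero.mp D.hxz
lemma z_mul_y : D.z * D.y = D.z * D.x := sub_eq_zero.mp D.hzy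

lemma yx_mul_x : D.y * D.x * D.x = 0 := by rw [mul_assoc, D.hxx, mul_zero]
lemma yx_mul_y : D.y * D.x * D.y = 0 := by
  rw [mul_assoc, D.x_mul_y, mul_neg, mul_smul_comm, ← mul_assoc, D.hyy, zero_mul, smul_zero,
    neg_zero]
lemma yx_mul_z : D.y * D.x * D.z = 0 := by rw [mul_assoc, D.x_mul_z, ← mul_assoc, D.hyz, zero_mul]
lemma zx_mul_x : D.z * D.x * D.x = 0 := by rw [mul_assoc, D.hxx, mul_zero]
lemma zx_mul_y : D.z * D.x * D.y = 0 := by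
  rw [mul_assoc, D.x_mul_y, mul_neg, mul_smul_comm, ← mul_assoc, D.z_mul_y, mul_assoc, D.hxx,
    mul_zero, smul_zero, neg_zero]
lemma zx_mul_z : D.z * D.x * D.z = 0 := by rw [mul_assoc, D.x_mul_z, ← mul_assoc, D.hzz, zero_mul]

variable (a b c : k)

lemma x_mul_w : D.x * D.w a b c = (-(q * b)) • (D.y * D.x) + c • (D.z * D.x) := by
  simp only [w, mul_add, mul_smul_comm, D.hxx, D.x_mul_y, D.x_mul_z]
  module

lemma y_mul_w : D.y * D.w a b c = a • (D.y * D.x) := by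
  simp only [w, mul_add, mul_smul_comm, D.hyy, D.hyz]
  module

lemma z_mul_w : D.z * D.w a b c = (a + b) • (D.z * D.x) := by
  simp only [w, mul_add, mul_smul_comm, D.hzz, D.z_mul_y]
  module

lemma yx_mul_w : D.y * D.x * D.w a b c = 0 := by
  simp only [w, mul_add, mul_smul_comm, D.yx_mul_x, D.yx_mul_y, D.yx_mul_z]
  module

lemma zx_mul_w : D.z * D.x * D.w a b c = 0 := by
  simp only [w, mul_add, mul_smul_comm, D.zx_mul_x, D.zx_mul_y, D.zx_mul_z]
  module

lemma w_mul_w (a' b' c' : k) :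
    D.w a' b' c' * D.w a b c =
      (b' * a - q * b * a') • (D.y * D.x) + (a' * c + c' * (a + b)) • (D.z * D.x) := by
  rw [w, add_mul, add_mul, smul_mul_assoc, smul_mul_assoc, smul_mul_assoc,
    D.x_mul_w, D.y_mul_w, D.z_mul_w]
  module

lemma exists_eq_smul_one_add_w (l : Λ) :
    ∃ r₀ a' b' c' s t : k,
      l = r₀ • (1 : Λ) + D.w a' b' c' + s • (D.y * D.x) + t • (D.z * D.x) := by
  refine ⟨D.basis.repr l 0, D.basis.repr l 1, D.basis.repr l 2, D.basis.repr l 3,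
    D.basis.repr l 4, D.basis.repr l 5, ?_⟩
  conv_lhs => rw [← D.basis.sum_repr l]
  rw [Fin.sum_univ_six, D.hb0, D.hb1, D.hb2, D.hb3, D.hb4, D.hb5, w]
  abel

lemma coeffs_eq_zero {r₀ r₁ r₂ r₃ r₄ r₅ : k}
    (h : r₀ • (1 : Λ) + r₁ • D.x + r₂ • D.y + r₃ • D.z + r₄ • (D.y * D.x) + r₅ • (D.z * D.x)
      = 0) :
    r₀ = 0 ∧ r₁ = 0 ∧ r₂ = 0 ∧ r₃ = 0 ∧ r₄ = 0 ∧ r₅ = 0 := by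
  have key := Fintype.linearIndependent_iff.mp D.basis.linearIndependent ![r₀, r₁, r₂, r₃, r₄, r₅]
    (by simpa [Fin.sum_univ_six, D.hb0, D.hb1, D.hb2, D.hb3, D.hb4, D.hb5] using h)
  exact ⟨key 0, key 1, key 2, key 3, key 4, key 5⟩

/-- `w(a',b',c') · w(a,b,c) = 0`: the coefficients of `yx` and `zx` in `w_mul_w` vanish. -/
def AnnihilatorEquations (q a b c a' b' c' : k) : Prop :=
  b' * a = q * b * a' ∧ a' * c + c' * (a + b) = 0

variable {a b c}

lemma w_mul_w_eq_zero {a' b' c' : k} (h : AnnihilatorEquations q a b c a' b' c') :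
    D.w a' b' c' * D.w a b c = 0 := by
  rw [D.w_mul_w, sub_eq_zero.mpr h.1, h.2, zero_smul, zero_smul, add_zero]

lemma exists_annihilatorEquations_of_mul_w_eq_zero (habc : (a, b, c) ≠ 0) {l : Λ}
    (hl : l * D.w a b c = 0) :
    ∃ a' b' c' s t : k, AnnihilatorEquations q a b c a' b' c' ∧
      l = D.w a' b' c' + s • (D.y * D.x) + t • (D.z * D.x) := by
  obtain ⟨r₀, a', b', c', s, t, rfl⟩ := D.exists_eq_smul_one_add_w l
  have hexp : (0 : k) • (1 : Λ) + (r₀ * a) • D.x + (r₀ * b) • D.y + (r₀ * c) • D.z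
      + (b' * a - q * b * a') • (D.y * D.x) + (a' * c + c' * (a + b)) • (D.z * D.x) = 0 := by
    rw [← hl, add_mul, add_mul, add_mul, smul_mul_assoc, smul_mul_assoc, smul_mul_assoc, one_mul,
      D.w_mul_w, D.yx_mul_w, D.zx_mul_w, w]
    module
  obtain ⟨-, h₁, h₂, h₃, h₄, h₅⟩ := D.coeffs_eq_zero hexp
  have hr₀ : r₀ = 0 := by
    by_contra hr₀
    simp_all
  exact ⟨a', b', c', s, t, ⟨sub_eq_zero.mp h₄, h₅⟩, by rw [hr₀, zero_smul, zero_add]⟩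

lemma w_mem_U : D.w a b c ∈ D.U a b c := Submodule.subset_span (by simp)
lemma yx_mem_U : D.y * D.x ∈ D.U a b c := Submodule.subset_span (by simp)
lemma zx_mem_U : D.z * D.x ∈ D.U a b c := Submodule.subset_span (by simp)

lemma torsionOf_w_eq_U {a' b' c' : k} (habc : (a, b, c) ≠ 0)
    (hann : AnnihilatorEquations q a b c a' b' c')
    (hline : ∀ a'' b'' c'', AnnihilatorEquations q a b c a'' b'' c'' →
      ∃ r : k, a'' = r * a' ∧ b'' = r * b' ∧ c'' = r * c') :
    Ideal.torsionOf Λ Λ (D.w a b c) = D.U a' b' c' := by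
  apply le_antisymm
  · intro l hl
    rw [Ideal.mem_torsionOf_iff, smul_eq_mul] at hl
    obtain ⟨a'', b'', c'', s, t, heq, rfl⟩ := D.exists_annihilatorEquations_of_mul_w_eq_zero habc hl
    obtain ⟨r, rfl, rfl, rfl⟩ := hline a'' b'' c'' heq
    have hw : D.w (r * a') (r * b') (r * c') = r • D.w a' b' c' := by
      simp only [w, smul_add, mul_smul]
    rw [hw]
    exact add_mem (add_mem (Submodule.smul_of_tower_mem _ r D.w_mem_U)
      (Submodule.smul_of_tower_mem _ s D.yx_mem_U)) (Submodule.smul_of_tower_mem _ t D.zx_mem_U)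
  · rw [U, Submodule.span_le]
    rintro v (rfl | rfl | rfl)
    · exact D.w_mul_w_eq_zero hann
    · exact D.yx_mul_w a b c
    · exact D.zx_mul_w a b c

variable (a b c)

lemma smul_yx_mem_span_w : a • (D.y * D.x) ∈ Λ ∙ D.w a b c := by
  rw [← D.y_mul_w, ← smul_eq_mul]
  exact Submodule.smul_mem _ _ (Submodule.mem_span_singleton_self _)

lemma smul_zx_mem_span_w : (a + b) • (D.z * D.x) ∈ Λ ∙ D.w a b c := by
  rw [← D.z_mul_w, ← smul_eq_mul]
  exact Submodule.smul_mem _ _ (Submodule.mem_span_singleton_self _)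

lemma x_mul_w_mem_span_w : (-(q * b)) • (D.y * D.x) + c • (D.z * D.x) ∈ Λ ∙ D.w a b c := by
  rw [← D.x_mul_w, ← smul_eq_mul]
  exact Submodule.smul_mem _ _ (Submodule.mem_span_singleton_self _)

variable {a b c}

lemma U_eq_span_w (hyx : D.y * D.x ∈ Λ ∙ D.w a b c) (hzx : D.z * D.x ∈ Λ ∙ D.w a b c) :
    D.U a b c = Λ ∙ D.w a b c :=
  le_antisymm
    (Submodule.span_le.mpr (by simp [Set.insert_subset_iff, hyx, hzx,
      Submodule.mem_span_singleton_self]))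
    (Submodule.span_mono (by simp))

lemma nonempty_U_equiv_M {a' b' c' : k} (habc : (a, b, c) ≠ 0)
    (hyx : D.y * D.x ∈ Λ ∙ D.w a b c) (hzx : D.z * D.x ∈ Λ ∙ D.w a b c)
    (hann : AnnihilatorEquations q a b c a' b' c')
    (hline : ∀ a'' b'' c'', AnnihilatorEquations q a b c a'' b'' c'' →
      ∃ r : k, a'' = r * a' ∧ b'' = r * b' ∧ c'' = r * c') :
    Nonempty (D.U a b c ≃ₗ[Λ] D.M a' b' c') :=
  ⟨LinearEquiv.ofEq _ _ (D.U_eq_span_w hyx hzx) ≪≫ₗ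
    (Ideal.quotTorsionOfEquivSpanSingleton Λ Λ _).symm ≪≫ₗ
    Submodule.quotEquivOfEq _ _ (D.torsionOf_w_eq_U habc hann hline)⟩

lemma nonempty_U_equiv_M_omega (ha : a ≠ 0) (hab : a + b ≠ 0) :
    Nonempty (D.U a b c ≃ₗ[Λ] D.M a (q * b) (-(a / (a + b)) * c)) := by
  have hyx := (Submodule.smul_mem_iff _ ha).mp (D.smul_yx_mem_span_w a b c)
  have hzx := (Submodule.smul_mem_iff _ hab).mp (D.smul_zx_mem_span_w a b c)
  refine D.nonempty_U_equiv_M (by simp [ha]) hyx hzx ⟨by ring, by field_simp; ring⟩ ?_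
  rintro a'' b'' c'' ⟨h₁, h₂⟩
  refine ⟨a'' / a, by field_simp, ?_, ?_⟩
  · field_simp
    linear_combination h₁
  · field_simp
    linear_combination h₂

lemma nonempty_U_equiv_M_zero_zero_one (ha : a ≠ 0) (hab : a + b = 0) (hc : c ≠ 0) :
    Nonempty (D.U a b c ≃ₗ[Λ] D.M 0 0 1) := by
  have hyx := (Submodule.smul_mem_iff _ ha).mp (D.smul_yx_mem_span_w a b c)
  have hzx : D.z * D.x ∈ Λ ∙ D.w a b c := by
    refine (Submodule.smul_mem_iff _ hc).mp ?_
    simpa using sub_mem (D.x_mul_w_mem_span_w a b c) (Submodule.smul_of_tower_mem _ (-(q * b)) hyx)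
  refine D.nonempty_U_equiv_M (by simp [ha]) hyx hzx ⟨by ring, by rw [hab]; ring⟩ ?_
  rintro a'' b'' c'' ⟨h₁, h₂⟩
  rw [hab, mul_zero, add_zero] at h₂
  have ha'' : a'' = 0 := (mul_eq_zero.mp h₂).resolve_right hc
  rw [ha'', mul_zero] at h₁
  exact ⟨c'', by simp [ha''], by simpa [ha] using h₁, by ring⟩

lemma nonempty_U_equiv_M_zero_one_zero (hq : q ≠ 0) (ha : a = 0) (hb : b ≠ 0) :
    Nonempty (D.U a b c ≃ₗ[Λ] D.M 0 1 0) := by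
  subst ha
  have hzx := (Submodule.smul_mem_iff _ (by simpa using hb)).mp (D.smul_zx_mem_span_w 0 b c)
  have hyx : D.y * D.x ∈ Λ ∙ D.w 0 b c := by
    refine (Submodule.smul_mem_iff _ (neg_ne_zero.mpr (mul_ne_zero hq hb))).mp ?_
    simpa using sub_mem (D.x_mul_w_mem_span_w 0 b c) (Submodule.smul_of_tower_mem _ c hzx)
  refine D.nonempty_U_equiv_M (by simp [hb]) hyx hzx ⟨by ring, by ring⟩ ?_
  rintro a'' b'' c'' ⟨h₁, h₂⟩
  have ha'' : a'' = 0 := by simpa [hq, hb] using h₁.symm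
  rw [ha'', zero_mul, zero_add, zero_add] at h₂
  exact ⟨b'', by simp [ha''], by ring, by simpa [hb] using h₂⟩

end LambdaAlg

theorem statement8_general (k : Type) [Field k] (q : k) (hq : q ≠ 0)
    (Λ : Type) [Ring Λ] [Algebra k Λ] (D : LambdaAlg k q Λ)
    (a b c : k) :
    (a ≠ 0 → a + b ≠ 0 →
      Nonempty (↥(D.U a b c) ≃ₗ[Λ] D.M a (q * b) (-(a / (a + b)) * c)))
    ∧ (a ≠ 0 → a + b = 0 → c ≠ 0 → Nonempty (↥(D.U a b c) ≃ₗ[Λ] D.M 0 0 1))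
    ∧ (a = 0 → b ≠ 0 → Nonempty (↥(D.U a b c) ≃ₗ[Λ] D.M 0 1 0)) :=
  ⟨D.nonempty_U_equiv_M_omega, D.nonempty_U_equiv_M_zero_zero_one,
    D.nonempty_U_equiv_M_zero_one_zero hq⟩

/-- (1) If `a ≠ 0` and `a+b ≠ 0` then `U(a,b,c) ≅ M(ω(a,b,c))` where
`ω(a,b,c) = (a, qb, −(a/(a+b))c)`; (2) if `a ≠ 0`, `a+b = 0`, `c ≠ 0` then
`U(a,b,c) ≅ M(0,0,1)`; (3) if `a = 0` and `b ≠ 0` then `U(a,b,c) ≅ M(0,1,0)`. -/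
theorem statement8 (k : Type) [Field k] (q : k) (hq : q ≠ 0)
    (Λ : Type) [Ring Λ] [Algebra k Λ] (D : LambdaAlg k q Λ)
    (a b c : k) (h : (a, b, c) ≠ (0, 0, 0)) :
    (a ≠ 0 → a + b ≠ 0 →
      Nonempty (↥(D.U a b c) ≃ₗ[Λ] D.M a (q * b) (-(a / (a + b)) * c)))
    ∧ (a ≠ 0 → a + b = 0 → c ≠ 0 → Nonempty (↥(D.U a b c) ≃ₗ[Λ] D.M 0 0 1))
    ∧ (a = 0 → b ≠ 0 → Nonempty (↥(D.U a b c) ≃ₗ[Λ] D.M 0 1 0)) :=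
  statement8_general k q hq Λ D a b c
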